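/- Let Σ̃ ∈ ℝ^{p×p} be symmetric positive semidefinite and Σ ∈ ℝ^{p×p} be positive definite with Ω = Σ^{−1}. Fix j and let T = {i : Ω_{ij} ≠ 0} with s_j = |T|, and suppose λ_j ≥ ‖(Σ̃ − Σ)Ω_{·,j}‖_∞. Then the program min{ ‖w‖₁ : ‖Σ̃w − e_j‖_∞ ≤ λ_j } is feasible (Ω_{·,j} is feasible), and any solution w̃_j satisfies: (i) ‖w̃_j‖₁ ≤ ‖Ω_{·,j}‖₁; (ii) h = w̃_j − Ω_{·,j} obeys the cone condition ‖h_{T^c}‖₁ ≤ ‖h_T‖₁ and ‖Σ̃h‖_∞ ≤ 2λ_j. If in addition there is κ > 0 with κ‖v‖₂² ≤ vᵀΣ̃v for every v ∈ ℝ^p satisfying ‖v_{T^c}‖₁ ≤ ‖v_T‖₁, then ‖w̃_j − Ω_{·,j}‖₂ ≤ 4λ_j√(s_j)/κ and ‖w̃_j − Ω_{·,j}‖₁ ≤ 8λ_j·s_j/κ. -/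

import Mathlib

/-! Since `Σ Ω_{·,j} = e_j`, the residual of `Ω_{·,j}` in the Dantzig program is `(Σ̃ - Σ) Ω_{·,j}`,
so `Ω_{·,j}` is feasible; minimality of `w̃_j` then gives `‖w̃_j‖₁ ≤ ‖Ω_{·,j}‖₁`, which off the
support `T` of `Ω_{·,j}` forces the cone condition for `h = w̃_j - Ω_{·,j}`, and the triangle
inequality gives `‖Σ̃h‖_∞ ≤ 2λ_j`. On the cone `‖h‖₁ ≤ 2‖h_T‖₁ ≤ 2√s_j ‖h‖₂`, so the restricted
eigenvalue condition yields `κ‖h‖₂² ≤ hᵀΣ̃h ≤ ‖h‖₁ ‖Σ̃h‖_∞ ≤ 4λ_j √s_j ‖h‖₂`. -/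

open MeasureTheory ProbabilityTheory Filter Matrix Real Topology
open scoped ENNReal NNReal

noncomputable section

namespace ProxyData

def l0 {p : ℕ} (v : Fin p → ℝ) : ℕ := (Function.support v).ncard

def l1 {p : ℕ} (v : Fin p → ℝ) : ℝ := ∑ i, |v i|

def l2sq {p : ℕ} (v : Fin p → ℝ) : ℝ := ∑ i, (v i) ^ 2

def linf {p : ℕ} (v : Fin p → ℝ) : ℝ := ⨆ i, |v i|

/-- The old `Matrix.PosSemidef.sqrt` (removed from Mathlib), spelled out. -/
def psdSqrt {p : ℕ} {S : Matrix (Fin p) (Fin p) ℝ} (hS : S.PosSemidef) :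
    Matrix (Fin p) (Fin p) ℝ :=
  (hS.1.eigenvectorUnitary : Matrix (Fin p) (Fin p) ℝ) *
    diagonal ((↑) ∘ (Real.sqrt ·) ∘ hS.1.eigenvalues) *
    (star hS.1.eigenvectorUnitary : Matrix (Fin p) (Fin p) ℝ)

def gaussianVec {p : ℕ} (S : Matrix (Fin p) (Fin p) ℝ) (hS : S.PosSemidef) :
    Measure (Fin p → ℝ) :=
  (Measure.pi fun _ : Fin p => gaussianReal 0 1).map fun z => psdSqrt hS *ᵥ z

def EigBounds {p : ℕ} (S : Matrix (Fin p) (Fin p) ℝ) (C₁ : ℝ) : Prop :=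
  S.IsSymm ∧ ∀ v : Fin p → ℝ, C₁⁻¹ * l2sq v ≤ v ⬝ᵥ S *ᵥ v ∧ v ⬝ᵥ S *ᵥ v ≤ C₁ * l2sq v

def SubGaussianLaw (ν : Measure ℝ) (K : ℝ) : Prop :=
  ∀ l : ℕ, 1 ≤ l → (∫ x, |x| ^ l ∂ν) ^ ((l : ℝ)⁻¹) ≤ K * Real.sqrt l

def NoiseLaw (ν : Measure ℝ) (σ K : ℝ) : Prop :=
  IsProbabilityMeasure ν ∧ Integrable (fun x => x) ν ∧ Integrable (fun x => x ^ 2) ν ∧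
    (∫ x, x ∂ν) = 0 ∧ (∫ x, x ^ 2 ∂ν) = σ ^ 2 ∧ SubGaussianLaw ν K

abbrev SampleSpace (p n m : ℕ) :=
  (Fin n → Fin p → ℝ) × (Fin n → ℝ) × (Fin m → Fin p → ℝ)

def modelMeasure {p : ℕ} (n m : ℕ) (S : Matrix (Fin p) (Fin p) ℝ) (hS : S.PosSemidef)
    (ν : Measure ℝ) : Measure (SampleSpace p n m) :=
  (Measure.pi fun _ : Fin n => gaussianVec S hS).prod
    ((Measure.pi fun _ : Fin n => ν).prod (Measure.pi fun _ : Fin m => gaussianVec S hS))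

def yVal {p n m : ℕ} (β : Fin p → ℝ) (ω : SampleSpace p n m) (i : Fin n) : ℝ :=
  (∑ j, ω.1 i j * β j) + ω.2.1 i

def Shat {p n m : ℕ} (β : Fin p → ℝ) (ω : SampleSpace p n m) : Fin p → ℝ :=
  fun j => (∑ i, ω.1 i j * yVal β ω i) / n

def SigTilde {p n m : ℕ} (ω : SampleSpace p n m) : Matrix (Fin p) (Fin p) ℝ :=
  fun j k => (∑ i, ω.2.2 i j * ω.2.2 i k) / m

def gammaNN {p : ℕ} (S : Matrix (Fin p) (Fin p) ℝ) (β : Fin p → ℝ) (σ : ℝ) (n m : ℕ) : ℝ :=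
  σ ^ 2 + (β ⬝ᵥ S *ᵥ β) * ((n : ℝ) / m + 1)

def lassoObj {p : ℕ} (A : Matrix (Fin p) (Fin p) ℝ) (s : Fin p → ℝ) (lam : ℝ)
    (b : Fin p → ℝ) : ℝ :=
  (1 / 2) * (b ⬝ᵥ A *ᵥ b) - b ⬝ᵥ s + lam * l1 b

def IsLassoSol {p : ℕ} (A : Matrix (Fin p) (Fin p) ℝ) (s : Fin p → ℝ) (lam : ℝ)
    (bhat : Fin p → ℝ) : Prop :=
  ∀ b, lassoObj A s lam bhat ≤ lassoObj A s lam b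

def DantzigFeas {p : ℕ} (A : Matrix (Fin p) (Fin p) ℝ) (t : Fin p → ℝ) (lam : ℝ)
    (w : Fin p → ℝ) : Prop :=
  linf (fun i => (A *ᵥ w) i - t i) ≤ lam

def IsDantzigSol {p : ℕ} (A : Matrix (Fin p) (Fin p) ℝ) (t : Fin p → ℝ) (lam : ℝ)
    (w : Fin p → ℝ) : Prop :=
  DantzigFeas A t lam w ∧ ∀ w', DantzigFeas A t lam w' → l1 w ≤ l1 w'

def stdNormalCDF (t : ℝ) : ℝ := (gaussianReal 0 1 (Set.Iic t)).toReal

def BigOP {Ωs : ℕ → Type*} [∀ k, MeasurableSpace (Ωs k)] (μ : ∀ k, Measure (Ωs k))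
    (X : ∀ k, Ωs k → ℝ) (r : ℕ → ℝ) : Prop :=
  ∀ ε : ℝ, 0 < ε → ∃ C : ℝ, 0 < C ∧
    ∀ᶠ k in atTop, (μ k {ω | C * r k < |X k ω|}).toReal ≤ ε

def TendstoStdNormal {Ωs : ℕ → Type*} [∀ k, MeasurableSpace (Ωs k)] (μ : ∀ k, Measure (Ωs k))
    (X : ∀ k, Ωs k → ℝ) : Prop :=
  ∀ t : ℝ, Tendsto (fun k => (μ k {ω | X k ω ≤ t}).toReal) atTop (𝓝 (stdNormalCDF t))

def omegaCol {p : ℕ} (S : Matrix (Fin p) (Fin p) ℝ) (j : Fin p) : Fin p → ℝ := fun i => S⁻¹ i j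

def zstat {p n m : ℕ} (S : Matrix (Fin p) (Fin p) ℝ) (β : Fin p → ℝ) (j : Fin p)
    (ω : SampleSpace p n m) : ℝ :=
  omegaCol S j ⬝ᵥ (fun i => Shat β ω i - (S *ᵥ β) i)
    + omegaCol S j ⬝ᵥ ((S - SigTilde ω) *ᵥ β)

def Vts {p : ℕ} (S : Matrix (Fin p) (Fin p) ℝ) (β : Fin p → ℝ) (σ : ℝ) (n m : ℕ)
    (j : Fin p) : ℝ :=
  S⁻¹ j j * gammaNN S β σ n m / n + (β j) ^ 2 / n + (β j) ^ 2 / m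

lemma l1_nonneg {p : ℕ} (v : Fin p → ℝ) : 0 ≤ l1 v :=
  Finset.sum_nonneg fun _ _ => abs_nonneg _

lemma l2sq_nonneg {p : ℕ} (v : Fin p → ℝ) : 0 ≤ l2sq v :=
  Finset.sum_nonneg fun _ _ => sq_nonneg _

lemma linf_nonneg {p : ℕ} (v : Fin p → ℝ) : 0 ≤ linf v :=
  Real.iSup_nonneg fun _ => abs_nonneg _

lemma abs_le_linf {p : ℕ} (v : Fin p → ℝ) (i : Fin p) : |v i| ≤ linf v :=
  le_ciSup (f := fun i => |v i|) (Set.finite_range _).bddAbove i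

lemma l1_sub_le {p : ℕ} (u v : Fin p → ℝ) : l1 (u - v) ≤ l1 u + l1 v := by
  simp only [l1, ← Finset.sum_add_distrib]
  exact Finset.sum_le_sum fun i _ => abs_sub (u i) (v i)

lemma linf_sub_le {p : ℕ} (u v : Fin p → ℝ) : linf (u - v) ≤ linf u + linf v :=
  Real.iSup_le
    (fun i => (abs_sub (u i) (v i)).trans (add_le_add (abs_le_linf u i) (abs_le_linf v i)))
    (add_nonneg (linf_nonneg u) (linf_nonneg v))

lemma l1_indicator_add_l1_indicator_compl {p : ℕ} (T : Set (Fin p)) (v : Fin p → ℝ) :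
    l1 (T.indicator v) + l1 (Tᶜ.indicator v) = l1 v := by
  simp only [l1, ← Finset.sum_add_distrib]
  refine Finset.sum_congr rfl fun i _ => ?_
  by_cases hi : i ∈ T <;> simp [hi]

lemma dotProduct_le_l1_mul_linf {p : ℕ} (u v : Fin p → ℝ) : u ⬝ᵥ v ≤ l1 u * linf v := by
  simp only [dotProduct, l1, Finset.sum_mul]
  refine Finset.sum_le_sum fun i _ => ?_
  calc u i * v i ≤ |u i| * |v i| := (le_abs_self _).trans (abs_mul _ _).le
    _ ≤ |u i| * linf v := mul_le_mul_of_nonneg_left (abs_le_linf v i) (abs_nonneg _)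

lemma l1_indicator_le_sqrt_ncard_mul {p : ℕ} (T : Set (Fin p)) (v : Fin p → ℝ) :
    l1 (T.indicator v) ≤ √T.ncard * √(l2sq v) := by
  classical
  have hl1 : l1 (T.indicator v) = ∑ i ∈ T.toFinset, |v i| * 1 := by
    simp only [l1, Set.indicator_apply, apply_ite, abs_zero, mul_one, ← Finset.sum_filter]
    congr 1
    ext i
    simp
  have hsq : ∑ i ∈ T.toFinset, |v i| ^ 2 ≤ l2sq v := by
    simp only [sq_abs, l2sq]
    exact Finset.sum_le_sum_of_subset_of_nonneg (Finset.subset_univ _) fun i _ _ => sq_nonneg _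
  calc l1 (T.indicator v)
      ≤ √(∑ i ∈ T.toFinset, |v i| ^ 2) * √(∑ i ∈ T.toFinset, (1 : ℝ) ^ 2) :=
        hl1 ▸ Real.sum_mul_le_sqrt_mul_sqrt _ _ _
    _ ≤ √T.ncard * √(l2sq v) := by
        rw [mul_comm, Set.ncard_eq_toFinset_card']
        simp only [one_pow, Finset.sum_const, nsmul_eq_mul, mul_one]
        gcongr

lemma l1_indicator_compl_support_sub_le_of_l1_le {p : ℕ} {w ω : Fin p → ℝ}
    (h : l1 w ≤ l1 ω) :
    l1 ((Function.support ω)ᶜ.indicator (w - ω))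
      ≤ l1 ((Function.support ω).indicator (w - ω)) := by
  set T := Function.support ω
  have hTc : Tᶜ.indicator (w - ω) = Tᶜ.indicator w := by
    ext i
    by_cases hi : ω i = 0 <;> simp [T, hi]
  have hω : l1 ω ≤ l1 (T.indicator w) + l1 (T.indicator (w - ω)) :=
    calc l1 ω = l1 (T.indicator w - T.indicator (w - ω)) := by
          rw [← Set.indicator_sub', sub_sub_cancel, Set.indicator_support]
      _ ≤ _ := l1_sub_le _ _
  rw [hTc]
  linarith [l1_indicator_add_l1_indicator_compl T w]

section Dantzig

variable {p : ℕ} {A : Matrix (Fin p) (Fin p) ℝ} {t : Fin p → ℝ} {lam : ℝ}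

lemma dantzigFeas_of_mulVec_eq {B : Matrix (Fin p) (Fin p) ℝ} {ω : Fin p → ℝ} (hB : B *ᵥ ω = t)
    (h : linf ((A - B) *ᵥ ω) ≤ lam) : DantzigFeas A t lam ω := by
  rw [sub_mulVec, hB] at h
  exact h

lemma DantzigFeas.linf_mulVec_sub_le {w ω : Fin p → ℝ} (hw : DantzigFeas A t lam w)
    (hω : DantzigFeas A t lam ω) : linf (A *ᵥ (w - ω)) ≤ 2 * lam := by
  have hsplit : A *ᵥ (w - ω) = (A *ᵥ w - t) - (A *ᵥ ω - t) := by
    rw [mulVec_sub]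
    abel
  rw [hsplit, two_mul]
  exact (linf_sub_le _ _).trans (add_le_add hw hω)

end Dantzig

lemma mulVec_omegaCol {p : ℕ} {S : Matrix (Fin p) (Fin p) ℝ} (hS : IsUnit S.det) (j : Fin p) :
    S *ᵥ omegaCol S j = fun i => if i = j then 1 else 0 := by
  have hcol : omegaCol S j = S⁻¹ *ᵥ Pi.single j 1 := (mulVec_single_one _ _).symm
  rw [hcol, mulVec_mulVec, mul_nonsing_inv _ hS, one_mulVec]
  ext i
  simp [Pi.single_apply]

section RestrictedEigenvalue

variable {p : ℕ} {A : Matrix (Fin p) (Fin p) ℝ} {T : Set (Fin p)} {h : Fin p → ℝ} {μ κ : ℝ}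

lemma l1_le_of_cone (hcone : l1 (Tᶜ.indicator h) ≤ l1 (T.indicator h)) :
    l1 h ≤ 2 * (√T.ncard * √(l2sq h)) := by
  linarith [l1_indicator_add_l1_indicator_compl T h, l1_indicator_le_sqrt_ncard_mul T h]

lemma sqrt_l2sq_le_of_restricted_eigenvalue (hκ : 0 < κ)
    (hcone : l1 (Tᶜ.indicator h) ≤ l1 (T.indicator h)) (hRE : κ * l2sq h ≤ h ⬝ᵥ A *ᵥ h)
    (hAh : linf (A *ᵥ h) ≤ μ) : √(l2sq h) ≤ 2 * μ * √T.ncard / κ := by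
  set r := √(l2sq h)
  set s := √(T.ncard : ℝ)
  have hμ : 0 ≤ μ := (linf_nonneg _).trans hAh
  have key : κ * r ^ 2 ≤ 2 * μ * s * r :=
    calc κ * r ^ 2 = κ * l2sq h := by rw [Real.sq_sqrt (l2sq_nonneg h)]
      _ ≤ h ⬝ᵥ A *ᵥ h := hRE
      _ ≤ l1 h * μ :=
          (dotProduct_le_l1_mul_linf _ _).trans (mul_le_mul_of_nonneg_left hAh (l1_nonneg h))
      _ ≤ 2 * (s * r) * μ := mul_le_mul_of_nonneg_right (l1_le_of_cone hcone) hμ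
      _ = 2 * μ * s * r := by ring
  have hs : 0 ≤ s := Real.sqrt_nonneg _
  rw [le_div_iff₀ hκ]
  rcases (Real.sqrt_nonneg _ : 0 ≤ r).eq_or_lt with hr | hr
  · nlinarith [mul_nonneg hμ hs]
  · nlinarith

lemma l1_le_of_restricted_eigenvalue (hκ : 0 < κ)
    (hcone : l1 (Tᶜ.indicator h) ≤ l1 (T.indicator h)) (hRE : κ * l2sq h ≤ h ⬝ᵥ A *ᵥ h)
    (hAh : linf (A *ᵥ h) ≤ μ) : l1 h ≤ 4 * μ * T.ncard / κ :=
  calc l1 h ≤ 2 * (√T.ncard * √(l2sq h)) := l1_le_of_cone hcone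
    _ ≤ 2 * (√T.ncard * (2 * μ * √T.ncard / κ)) := by
        gcongr
        exact sqrt_l2sq_le_of_restricted_eigenvalue hκ hcone hRE hAh
    _ = 4 * μ * (√T.ncard * √T.ncard) / κ := by ring
    _ = 4 * μ * T.ncard / κ := by rw [Real.mul_self_sqrt (Nat.cast_nonneg _)]

end RestrictedEigenvalue

theorem statement_16_general {p : ℕ} (St : Matrix (Fin p) (Fin p) ℝ)
    (S : Matrix (Fin p) (Fin p) ℝ) (hS : S.PosDef) (j : Fin p) (lamj : ℝ)
    (hfeas : linf ((St - S) *ᵥ omegaCol S j) ≤ lamj) :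
    -- `Ω_{·,j}` is feasible
    DantzigFeas St (fun i => if i = j then 1 else 0) lamj (omegaCol S j) ∧
    ∀ w : Fin p → ℝ, IsDantzigSol St (fun i => if i = j then 1 else 0) lamj w →
      -- (i) `‖w̃_j‖₁ ≤ ‖Ω_{·,j}‖₁`
      l1 w ≤ l1 (omegaCol S j) ∧
      -- (ii) cone condition and `‖Σ̃h‖_∞ ≤ 2λ_j` for `h = w̃_j − Ω_{·,j}`
      (l1 ((Function.support (omegaCol S j))ᶜ.indicator fun i => w i - omegaCol S j i)
          ≤ l1 ((Function.support (omegaCol S j)).indicator fun i => w i - omegaCol S j i)) ∧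
      linf (St *ᵥ fun i => w i - omegaCol S j i) ≤ 2 * lamj ∧
      -- (iii) bounds under the restricted eigenvalue condition
      (∀ κ : ℝ, 0 < κ →
        (∀ v : Fin p → ℝ,
          l1 ((Function.support (omegaCol S j))ᶜ.indicator v)
              ≤ l1 ((Function.support (omegaCol S j)).indicator v) →
          κ * l2sq v ≤ v ⬝ᵥ St *ᵥ v) →
        Real.sqrt (l2sq fun i => w i - omegaCol S j i)
            ≤ 4 * lamj * Real.sqrt (l0 (omegaCol S j)) / κ ∧
        l1 (fun i => w i - omegaCol S j i) ≤ 8 * lamj * (l0 (omegaCol S j)) / κ) := by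
  set Ω := omegaCol S j
  have hΩ : DantzigFeas St (fun i => if i = j then 1 else 0) lamj Ω :=
    dantzigFeas_of_mulVec_eq (mulVec_omegaCol hS.det_pos.ne'.isUnit j) hfeas
  refine ⟨hΩ, fun w hw => ?_⟩
  have hl1 : l1 w ≤ l1 Ω := hw.2 Ω hΩ
  have hcone := l1_indicator_compl_support_sub_le_of_l1_le hl1
  have hSt := hw.1.linf_mulVec_sub_le hΩ
  refine ⟨hl1, hcone, hSt, fun κ hκ hRE => ⟨?_, ?_⟩⟩
  · exact (sqrt_l2sq_le_of_restricted_eigenvalue hκ hcone (hRE _ hcone) hSt).trans_eq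
      (by rw [l0]; ring)
  · exact (l1_le_of_restricted_eigenvalue hκ hcone (hRE _ hcone) hSt).trans_eq
      (by rw [l0]; ring)

/-- the deterministic lemma for the Dantzig-type correction score.
If `λ_j ≥ ‖(Σ̃ − Σ)Ω_{·,j}‖_∞` then `Ω_{·,j}` is feasible for the program
`min ‖w‖₁ s.t. ‖Σ̃w − e_j‖_∞ ≤ λ_j`, and any solution `w̃_j` satisfies
`‖w̃_j‖₁ ≤ ‖Ω_{·,j}‖₁`, the cone condition `‖h_{T^c}‖₁ ≤ ‖h_T‖₁` and
`‖Σ̃h‖_∞ ≤ 2λ_j` for `h = w̃_j − Ω_{·,j}`, `T = supp(Ω_{·,j})`; under a restricted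
eigenvalue condition for `Σ̃`, also `‖h‖₂ ≤ 4λ_j√(s_j)/κ` and `‖h‖₁ ≤ 8λ_j s_j/κ`. -/
theorem statement_16 {p : ℕ} (St : Matrix (Fin p) (Fin p) ℝ) (hSt : St.PosSemidef)
    (S : Matrix (Fin p) (Fin p) ℝ) (hS : S.PosDef) (j : Fin p) (lamj : ℝ)
    (hfeas : linf ((St - S) *ᵥ omegaCol S j) ≤ lamj) :
    -- `Ω_{·,j}` is feasible
    DantzigFeas St (fun i => if i = j then 1 else 0) lamj (omegaCol S j) ∧
    ∀ w : Fin p → ℝ, IsDantzigSol St (fun i => if i = j then 1 else 0) lamj w →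
      -- (i) `‖w̃_j‖₁ ≤ ‖Ω_{·,j}‖₁`
      l1 w ≤ l1 (omegaCol S j) ∧
      -- (ii) cone condition and `‖Σ̃h‖_∞ ≤ 2λ_j` for `h = w̃_j − Ω_{·,j}`
      (l1 ((Function.support (omegaCol S j))ᶜ.indicator fun i => w i - omegaCol S j i)
          ≤ l1 ((Function.support (omegaCol S j)).indicator fun i => w i - omegaCol S j i)) ∧
      linf (St *ᵥ fun i => w i - omegaCol S j i) ≤ 2 * lamj ∧
      -- (iii) bounds under the restricted eigenvalue condition
      (∀ κ : ℝ, 0 < κ →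
        (∀ v : Fin p → ℝ,
          l1 ((Function.support (omegaCol S j))ᶜ.indicator v)
              ≤ l1 ((Function.support (omegaCol S j)).indicator v) →
          κ * l2sq v ≤ v ⬝ᵥ St *ᵥ v) →
        Real.sqrt (l2sq fun i => w i - omegaCol S j i)
            ≤ 4 * lamj * Real.sqrt (l0 (omegaCol S j)) / κ ∧
        l1 (fun i => w i - omegaCol S j i) ≤ 8 * lamj * (l0 (omegaCol S j)) / κ) :=
  statement_16_general St S hS j lamj hfeas

end ProxyData
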